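/- Let n ≥ 1, x ∈ ℝ^n and k ∈ {1,…,n}. Then S_k(x) = (n−k+1)·x_(k) + Σ_{i=1}^n max(x_i − x_(k), 0), where x_(k) is the k-th order statistic of x. -/
import Mathlib


open Finset

/-- The quantile (pinball) loss `ρ_τ(u)`: `τ*u` if `u ≥ 0`, `(τ-1)*u` if `u < 0`. -/
noncomputable def pinball (τ u : ℝ) : ℝ := if 0 ≤ u then τ * u else (τ - 1) * u

/-- The `τ` sample quantile function `L_τ(y, γ) = ∑ i, ρ_τ (y i - γ)`. -/
noncomputable def sampleQuantileFn {n : ℕ} (τ : ℝ) (y : Fin n → ℝ) (γ : ℝ) : ℝ :=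
  ∑ i, pinball τ (y i - γ)

/-- `orderStat y i` is the `(i+1)`-th smallest entry of `y` (i.e. the `(i+1)`-th
order statistic, with 0-indexed `i : Fin n`). -/
noncomputable def orderStat {n : ℕ} (y : Fin n → ℝ) (i : Fin n) : ℝ :=
  y (Tuple.sort y i)

/-- The `k`-sum operator `S_k(y)`: the sum of the `n - k + 1` largest entries of `y`,
i.e. the sum of the order statistics in (1-indexed) positions `k, …, n`. -/
noncomputable def ksum {n : ℕ} (y : Fin n → ℝ) (k : ℕ) : ℝ :=
  ∑ i ∈ Finset.univ.filter (fun i : Fin n => k ≤ (i : ℕ) + 1), orderStat y i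

/-- `S_k(x) = (n−k+1)·x_(k) + Σ max(x_i − x_(k), 0)`, where `x_(k)` is
the `k`-th order statistic of `x`. -/
theorem stmt_11 (n : ℕ) (hn : 1 ≤ n) (x : Fin n → ℝ) (k : ℕ) (hk1 : 1 ≤ k) (hk2 : k ≤ n) :
    ksum x k = ((n : ℝ) - k + 1) * orderStat x ⟨k - 1, by omega⟩
      + ∑ i, max (x i - orderStat x ⟨k - 1, by omega⟩) 0 := by
  set t := orderStat x ⟨k - 1, by omega⟩ with ht
  have hmono : Monotone (orderStat x) := Tuple.monotone_sort x
  have hperm : ∑ i, max (x i - t) 0 = ∑ j, max (orderStat x j - t) 0 :=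
    (Equiv.sum_comp (Tuple.sort x) (fun i => max (x i - t) 0)).symm
  rw [hperm]
  rw [← Finset.sum_filter_add_sum_filter_not Finset.univ (fun i : Fin n => k ≤ (i : ℕ) + 1)]
  have h2 : ∑ j ∈ Finset.univ.filter (fun i : Fin n => ¬ k ≤ (i : ℕ) + 1),
      max (orderStat x j - t) 0 = 0 := by
    apply Finset.sum_eq_zero
    intro j hj
    simp only [Finset.mem_filter, not_le] at hj
    have : orderStat x j ≤ t := hmono (by simp [Fin.le_def]; omega)
    simp [max_eq_right, sub_nonpos.mpr this]
  have h1 : ∑ j ∈ Finset.univ.filter (fun i : Fin n => k ≤ (i : ℕ) + 1),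
      max (orderStat x j - t) 0
      = ∑ j ∈ Finset.univ.filter (fun i : Fin n => k ≤ (i : ℕ) + 1),
        (orderStat x j - t) := by
    apply Finset.sum_congr rfl
    intro j hj
    simp only [Finset.mem_filter] at hj
    have : t ≤ orderStat x j := hmono (by simp [Fin.le_def]; omega)
    simp [max_eq_left, sub_nonneg.mpr this]
  have hcard : (Finset.univ.filter (fun i : Fin n => k ≤ (i : ℕ) + 1)).card = n - k + 1 := by
    have : (Finset.univ.filter (fun i : Fin n => k ≤ (i : ℕ) + 1))
        = Finset.Ici (⟨k - 1, by omega⟩ : Fin n) := by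
      ext j
      simp only [Finset.mem_filter, Finset.mem_univ, true_and, Finset.mem_Ici, Fin.le_def,
        Fin.val_mk]
      omega
    rw [this, Fin.card_Ici]
    show n - (k - 1) = n - k + 1
    omega
  rw [h1, h2, Finset.sum_sub_distrib, Finset.sum_const, hcard]
  have hc : ((n : ℝ) - k + 1) = ((n - k + 1 : ℕ) : ℝ) := by push_cast [hk2]; ring
  unfold ksum
  rw [hc]
  simp only [nsmul_eq_mul, add_zero]
  ring
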